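/- arXiv:1003.5165 — 4 statements merged into one kernel-verified Lean document; each statement's English description precedes it below -/
import Mathlib

section
/- Let π = (π_1,...,π_Q) be a probability vector, s_2 = Σ_q π_q², s_3 = Σ_q π_q³, and α, β ∈ (0,1). Define m_1 = s_2·α + (1-s_2)·β, m_2 = s_3·α² + 2(s_2-s_3)·αβ + (1-2s_2+s_3)·β², m_3 = s_3·α³ + 3(s_2-s_3)·αβ² + (1-3s_2+2s_3)·β³. If m_2 ≠ m_1², then 2s_2³ - 3s_3·s_2 + s_3 ≠ 0 and β = [(s_3 - s_2·s_3)m_1³ + (s_2³ - s_3)m_2·m_1 + (s_3·s_2 - s_2³)m_3] / [(m_1² - m_2)(2s_2³ - 3s_3·s_2 + s_3)] and α = (m_1 + (s_2-1)β)/s_2. -/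
set_option maxHeartbeats 1000000


/-- Moment equations of the binary affiliation model (unequal proportions case):
if `m₂ ≠ m₁²` then the denominator `2s₂³ - 3s₃s₂ + s₃` is nonzero and `α, β` are
recovered from the moments by the stated rational formulas. -/
theorem stmt0 (Q : ℕ) (π : Fin Q → ℝ)
    (hπ : ∀ q, 0 ≤ π q) (hsum : ∑ q, π q = 1)
    (α β : ℝ) (hα : α ∈ Set.Ioo (0:ℝ) 1) (hβ : β ∈ Set.Ioo (0:ℝ) 1)
    (s2 s3 m1 m2 m3 : ℝ)
    (hs2 : s2 = ∑ q, (π q) ^ 2) (hs3 : s3 = ∑ q, (π q) ^ 3)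
    (hm1 : m1 = s2 * α + (1 - s2) * β)
    (hm2 : m2 = s3 * α ^ 2 + 2 * (s2 - s3) * (α * β) + (1 - 2 * s2 + s3) * β ^ 2)
    (hm3 : m3 = s3 * α ^ 3 + 3 * (s2 - s3) * (α * β ^ 2) + (1 - 3 * s2 + 2 * s3) * β ^ 3)
    (hne : m2 ≠ m1 ^ 2) :
    2 * s2 ^ 3 - 3 * s3 * s2 + s3 ≠ 0 ∧
    β = ((s3 - s2 * s3) * m1 ^ 3 + (s2 ^ 3 - s3) * (m2 * m1) + (s3 * s2 - s2 ^ 3) * m3) /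
        ((m1 ^ 2 - m2) * (2 * s2 ^ 3 - 3 * s3 * s2 + s3)) ∧
    α = (m1 + (s2 - 1) * β) / s2 := by
  -- basic facts about π
  have hπ1 : ∀ q, π q ≤ 1 := by
    intro q
    calc π q ≤ ∑ r, π r := Finset.single_le_sum (fun r _ => hπ r) (Finset.mem_univ q)
    _ = 1 := hsum
  -- s3 ≠ s2 ^ 2
  have hne' : s3 ≠ s2 ^ 2 := by
    intro h
    apply hne
    rw [hm2, hm1, h]; ring
  -- 0 ≤ s2, 0 ≤ s3
  have hs2nonneg : 0 ≤ s2 := by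
    rw [hs2]; exact Finset.sum_nonneg fun q _ => sq_nonneg _
  have hs3nonneg : 0 ≤ s3 := by
    rw [hs3]; exact Finset.sum_nonneg fun q _ => pow_nonneg (hπ q) 3
  -- 0 < s2
  have hs2pos : 0 < s2 := by
    rcases hs2nonneg.lt_or_eq with h | h
    · exact h
    · exfalso
      have h0 : ∀ q ∈ Finset.univ, (π q) ^ 2 = 0 := by
        rw [← Finset.sum_eq_zero_iff_of_nonneg (fun q _ => sq_nonneg (π q))]
        rw [← hs2, ← h]
      have : ∑ q, π q = 0 := Finset.sum_eq_zero fun q _ => by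
        have := h0 q (Finset.mem_univ q)
        have := pow_eq_zero_iff (n := 2) (by norm_num) |>.mp this
        exact this
      rw [hsum] at this; norm_num at this
  -- s2 ≤ 1
  have hs2le1 : s2 ≤ 1 := by
    rw [hs2, ← hsum]
    exact Finset.sum_le_sum fun q _ => by nlinarith [hπ q, hπ1 q]
  -- s2 < 1 (else s3 = s2 ^ 2)
  have hs2lt1 : s2 < 1 := by
    rcases hs2le1.lt_or_eq with h | h
    · exact h
    · exfalso
      have h0 : ∀ q ∈ Finset.univ, π q - (π q) ^ 2 = 0 := by
        rw [← Finset.sum_eq_zero_iff_of_nonneg (fun q _ => by nlinarith [hπ q, hπ1 q])]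
        rw [Finset.sum_sub_distrib, hsum, ← hs2, h]
        ring
      apply hne'
      have h3 : ∀ q, (π q) ^ 3 = (π q) ^ 2 := by
        intro q
        have := h0 q (Finset.mem_univ q)
        nlinarith [this]
      have : s3 = s2 := by
        rw [hs3, hs2]
        exact Finset.sum_congr rfl fun q _ => h3 q
      rw [this, h]; norm_num
  -- Cauchy–Schwarz: s3 ^ 2 ≤ s2 ^ 3
  have hCS : s3 ^ 2 ≤ s2 ^ 3 := by
    have h1 : (∑ q, π q * (π q) ^ 2) ^ 2 ≤ (∑ q, (π q) ^ 2) * (∑ q, ((π q) ^ 2) ^ 2) :=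
      Finset.sum_mul_sq_le_sq_mul_sq _ _ _
    have h2 : ∑ q, π q * (π q) ^ 2 = s3 := by rw [hs3]; exact Finset.sum_congr rfl fun q _ => by ring
    have h3 : (∑ q, ((π q) ^ 2) ^ 2) ≤ (∑ q, (π q) ^ 2) ^ 2 :=
      Finset.sum_sq_le_sq_sum_of_nonneg (fun q _ => sq_nonneg (π q))
    rw [h2, ← hs2] at h1
    rw [← hs2] at h3
    calc s3 ^ 2 ≤ s2 * (∑ q, ((π q) ^ 2) ^ 2) := h1
    _ ≤ s2 * s2 ^ 2 := by exact mul_le_mul_of_nonneg_left h3 hs2nonneg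
    _ = s2 ^ 3 := by ring
  -- D > 0
  have hDpos : 0 < 2 * s2 ^ 3 - 3 * s3 * s2 + s3 := by
    rcases le_or_gt (3 * s2) 1 with h | h
    · nlinarith [mul_nonneg hs3nonneg (sub_nonneg.2 h), pow_pos hs2pos 3]
    · set t := Real.sqrt s2 with ht
      have ht2 : t ^ 2 = s2 := Real.sq_sqrt hs2nonneg
      have htpos : 0 < t := Real.sqrt_pos.2 hs2pos
      have ht1 : t < 1 := by nlinarith
      have hs3t : s3 ≤ t ^ 3 := by
        have hsq : s3 ^ 2 ≤ (t ^ 3) ^ 2 := by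
          have : (t ^ 3) ^ 2 = s2 ^ 3 := by rw [← ht2]; ring
          linarith
        by_contra hc
        push_neg at hc
        nlinarith [mul_pos (sub_pos.2 hc) (by nlinarith [pow_pos htpos 3] : (0:ℝ) < s3 + t ^ 3)]
      have h31 : (0:ℝ) ≤ 3 * t ^ 2 - 1 := by nlinarith
      have hA : 0 ≤ (t ^ 3 - s3) * (3 * t ^ 2 - 1) :=
        mul_nonneg (sub_nonneg.2 hs3t) h31
      have hB : 0 < t ^ 3 * ((1 - t) * (1 - t)) * (2 * t + 1) :=
        mul_pos (mul_pos (pow_pos htpos 3) (mul_pos (sub_pos.2 ht1) (sub_pos.2 ht1)))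
          (by nlinarith : (0:ℝ) < 2 * t + 1)
      rw [← ht2]
      nlinarith [hA, hB]
  have hD : 2 * s2 ^ 3 - 3 * s3 * s2 + s3 ≠ 0 := ne_of_gt hDpos
  have hsub : m1 ^ 2 - m2 ≠ 0 := sub_ne_zero.2 (Ne.symm hne)
  refine ⟨hD, ?_, ?_⟩
  · rw [eq_div_iff (mul_ne_zero hsub hD), hm1, hm2, hm3]; ring
  · rw [eq_div_iff (ne_of_gt hs2pos), hm1]; ring
end

section
/- Let Q ≥ 2, π_q = 1/Q for all q, and α, β ∈ (0,1) with α ≠ β. Let s_2 = 1/Q and s_3 = 1/Q², and define m_1 = (1/Q)α + (1-1/Q)β and m_3 = s_3·α³ + 3(s_2-s_3)αβ² + (1-3s_2+2s_3)β³. Then β = m_1 + ((m_1³ - m_3)/(Q-1))^{1/3} and α = Q·m_1 + (1-Q)·β, where the cube root is the real cube root. -/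
/-- Moment equations of the binary affiliation model with equal group proportions
`π_q = 1/Q`: with `s₂ = 1/Q`, `s₃ = 1/Q²`, the parameters satisfy
`β = m₁ + ((m₁³ - m₃)/(Q-1))^{1/3}` (real cube root, expressed as `(β - m₁)³ = (m₁³-m₃)/(Q-1)`)
and `α = Q·m₁ + (1-Q)·β`. -/
theorem stmt1 (Q : ℕ) (hQ : 2 ≤ Q)
    (α β : ℝ) (hα : α ∈ Set.Ioo (0:ℝ) 1) (hβ : β ∈ Set.Ioo (0:ℝ) 1) (hab : α ≠ β)
    (s2 s3 m1 m3 : ℝ)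
    (hs2 : s2 = 1 / (Q : ℝ)) (hs3 : s3 = 1 / (Q : ℝ) ^ 2)
    (hm1 : m1 = s2 * α + (1 - s2) * β)
    (hm3 : m3 = s3 * α ^ 3 + 3 * (s2 - s3) * (α * β ^ 2) + (1 - 3 * s2 + 2 * s3) * β ^ 3) :
    (β - m1) ^ 3 = (m1 ^ 3 - m3) / ((Q : ℝ) - 1) ∧
    α = (Q : ℝ) * m1 + (1 - (Q : ℝ)) * β := by
  have hQ0 : (Q : ℝ) ≠ 0 := by positivity
  have hQ1 : (Q : ℝ) - 1 ≠ 0 := by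
    have : (2 : ℝ) ≤ Q := by exact_mod_cast hQ
    linarith
  subst hs2 hs3 hm1 hm3
  constructor
  · field_simp
    ring
  · field_simp
    ring
end

section
/- Under the affiliation assumption and equal group proportions, for any k ≥ 1, any bounded measurable g on X^{C(k,2)}, and any label tuple q ∈ {1,...,Q}^k, the conditional expectation m_g(q) = E[g(X^{(1,...,k)}) | Z_1 = q_1, ..., Z_k = q_k] is invariant under the action of any permutation σ of {1,...,Q} applied coordinatewise to q: m_g(σ(q_1),...,σ(q_k)) = m_g(q_1,...,q_k). -/
/-!
On the event `{Z = c}` the edge vector is `F` applied to the equality pattern of `c` and to the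
noise `U`, and the noise is independent of the labels. Hence the set integral over `{Z = c}`
factors as `P(Z = c)` times an expectation that depends on `c` only through its equality pattern,
while `P(Z = c) = Q⁻ᵏ` for every `c`. Both factors are unchanged when `c` is relabelled by `σ`.
-/

open MeasureTheory ProbabilityTheory

namespace ProbabilityTheory

variable {Ω : Type*} [MeasurableSpace Ω] {μ : Measure Ω}

lemma iIndepFun.indepFun_sumInl_sumInr {ι κ : Type*} [Fintype ι] [Fintype κ]
    {β : ι ⊕ κ → Type*} {m : ∀ i, MeasurableSpace (β i)} {f : ∀ i, Ω → β i}
    (hf : iIndepFun f μ) (hf_meas : ∀ i, Measurable (f i)) :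
    IndepFun (fun ω (i : ι) ↦ f (.inl i) ω) (fun ω (j : κ) ↦ f (.inr j) ω) μ := by
  classical
  have h := hf.indepFun_finset (Finset.univ.map .inl) (Finset.univ.map .inr)
    (by simp [Finset.disjoint_left]) hf_meas
  exact h.comp
    (measurable_pi_lambda (fun v i ↦ v ⟨.inl i, by simp⟩) fun i ↦ measurable_pi_apply _)
    (measurable_pi_lambda (fun v j ↦ v ⟨.inr j, by simp⟩) fun j ↦ measurable_pi_apply _)

lemma iIndepFun.indepFun_pi_of_sumElim {ι κ α β : Type*} [Fintype ι] [Fintype κ]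
    [MeasurableSpace α] [MeasurableSpace β] {Z : ι → Ω → α} {U : κ → Ω → β} {a₀ : α} {b₀ : β}
    (h : iIndepFun (fun i ↦ Sum.elim (fun j ω ↦ (Z j ω, b₀)) (fun e ω ↦ (a₀, U e ω)) i) μ)
    (hZ : ∀ i, Measurable (Z i)) (hU : ∀ e, Measurable (U e)) :
    IndepFun (fun ω i ↦ Z i ω) (fun ω e ↦ U e ω) μ := by
  refine (h.indepFun_sumInl_sumInr ?_).comp
    (measurable_pi_lambda _ fun i ↦ (measurable_pi_apply i).fst)
    (measurable_pi_lambda _ fun e ↦ (measurable_pi_apply e).snd)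
  rintro (j | e)
  exacts [(hZ j).prodMk measurable_const, measurable_const.prodMk (hU e)]

lemma iIndepFun.measure_forall_eq {ι : Type*} [Fintype ι] {β : ι → Type*}
    {m : ∀ i, MeasurableSpace (β i)} [∀ i, MeasurableSingletonClass (β i)] {f : ∀ i, Ω → β i}
    (hf : iIndepFun f μ) (c : ∀ i, β i) :
    μ {ω | ∀ i, f i ω = c i} = ∏ i, μ {ω | f i ω = c i} := by
  have h := hf.meas_iInter (s := fun i ↦ f i ⁻¹' {c i})
    fun i ↦ ⟨{c i}, measurableSet_singleton _, rfl⟩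
  simpa [Set.preimage, Set.iInter_ofPred] using h

lemma IndepFun.setIntegral_preimage_eq_mul {β γ : Type*} [mβ : MeasurableSpace β]
    [mγ : MeasurableSpace γ] {Y : Ω → β} {W : Ω → γ} (hYW : IndepFun Y W μ)
    (hY : Measurable Y) (hW : AEMeasurable W μ) {s : Set β} (hs : MeasurableSet s)
    {h : γ → ℝ} (hh : AEStronglyMeasurable h (μ.map W)) :
    ∫ ω in Y ⁻¹' s, h (W ω) ∂μ = μ.real (Y ⁻¹' s) * ∫ ω, h (W ω) ∂μ :=
  Indep.setIntegral_eq_mul hY.comap_le hYW hW ⟨s, hs, rfl⟩ hh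

lemma setIntegral_labelEvent_eq_mul {ι α β E 𝒳 : Type*} [Countable ι] [MeasurableSpace α]
    [MeasurableSingletonClass α] [DecidableEq α] [MeasurableSpace β] [MeasurableSpace 𝒳]
    {Z : ι → Ω → α} {U : E → Ω → β} {F : Bool → β → 𝒳} {X : E → Ω → 𝒳} {g : (E → 𝒳) → ℝ}
    (ends : E → ι × ι) (hblocks : IndepFun (fun ω i ↦ Z i ω) (fun ω e ↦ U e ω) μ)
    (hZ : ∀ i, Measurable (Z i)) (hU : ∀ e, Measurable (U e))
    (hF : Measurable fun x : Bool × β ↦ F x.1 x.2)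
    (hX : ∀ e ω, X e ω = F (decide (Z (ends e).1 ω = Z (ends e).2 ω)) (U e ω))
    (hg : Measurable g) (c : ι → α) :
    ∫ ω in {ω | ∀ i, Z i ω = c i}, g (fun e ↦ X e ω) ∂μ = μ.real {ω | ∀ i, Z i ω = c i} *
      ∫ ω, g (fun e ↦ F (decide (c (ends e).1 = c (ends e).2)) (U e ω)) ∂μ := by
  have hZvec : Measurable fun ω i ↦ Z i ω := measurable_pi_lambda _ hZ
  have hevent : {ω | ∀ i, Z i ω = c i} = (fun ω i ↦ Z i ω) ⁻¹' {c} := by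
    ext ω
    simp [funext_iff]
  have hh : Measurable fun u : E → β ↦ g fun e ↦ F (decide (c (ends e).1 = c (ends e).2)) (u e) :=
    hg.comp <| measurable_pi_lambda _ fun e ↦
      hF.comp (measurable_const.prodMk (measurable_pi_apply e))
  rw [hevent, ← hblocks.setIntegral_preimage_eq_mul hZvec
    (measurable_pi_lambda _ hU).aemeasurable (measurableSet_singleton c) hh.aestronglyMeasurable]
  refine setIntegral_congr_fun (hZvec (measurableSet_singleton c)) fun ω hω ↦ ?_
  rw [Set.mem_preimage, Set.mem_singleton_iff] at hω
  simp [hX, ← hω]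

end ProbabilityTheory

theorem stmt11_general {Ω 𝒳 : Type*} [MeasurableSpace Ω] [MeasurableSpace 𝒳]
    (μ : Measure Ω) [IsProbabilityMeasure μ]
    (Q k : ℕ) (hQ : 0 < Q)
    (Z : Fin k → Ω → Fin Q) (hZmeas : ∀ i, Measurable (Z i))
    (U : {p : Fin k × Fin k // p.1 < p.2} → Ω → ℝ) (hUmeas : ∀ p, Measurable (U p))
    (F : Bool → ℝ → 𝒳) (hF : Measurable fun x : Bool × ℝ => F x.1 x.2)
    (hindep : iIndepFun (m := fun _ : Fin k ⊕ {p : Fin k × Fin k // p.1 < p.2} => inferInstance)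
      (fun i => Sum.elim (fun j ω => (Z j ω, (0 : ℝ)))
        (fun p ω => ((⟨0, hQ⟩ : Fin Q), U p ω)) i) μ)
    (hZlaw : ∀ i q, μ {ω | Z i ω = q} = (Q : ENNReal)⁻¹)
    (X : {p : Fin k × Fin k // p.1 < p.2} → Ω → 𝒳)
    (hX : ∀ p ω, X p ω = F (decide (Z p.1.1 ω = Z p.1.2 ω)) (U p ω))
    (g : ({p : Fin k × Fin k // p.1 < p.2} → 𝒳) → ℝ)
    (hgmeas : Measurable g)
    (q : Fin k → Fin Q) (σ : Equiv.Perm (Fin Q)) :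
    μ {ω | ∀ l, Z l ω = σ (q l)} = μ {ω | ∀ l, Z l ω = q l} ∧
    ∫ ω in {ω | ∀ l, Z l ω = σ (q l)}, g (fun p => X p ω) ∂μ
      = ∫ ω in {ω | ∀ l, Z l ω = q l}, g (fun p => X p ω) ∂μ := by
  have hlabels : iIndepFun Z μ :=
    (hindep.precomp Sum.inl_injective).comp (fun _ ↦ Prod.fst) fun _ ↦ measurable_fst
  have hprob : ∀ c : Fin k → Fin Q, μ {ω | ∀ l, Z l ω = c l} = (Q : ENNReal)⁻¹ ^ k := by
    simp [hlabels.measure_forall_eq, hZlaw]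
  have hblocks := hindep.indepFun_pi_of_sumElim hZmeas hUmeas
  refine ⟨by rw [hprob, hprob], ?_⟩
  simp only [setIntegral_labelEvent_eq_mul Subtype.val hblocks hZmeas hUmeas hF hX hgmeas,
    measureReal_def, hprob, EmbeddingLike.apply_eq_iff_eq]

/-- Degeneracy lemma, part 2: in the affiliation model with equal group proportions,
the conditional expectation `m_g(q) = E[g(X^{(1,…,k)}) | Z_1 = q_1, …, Z_k = q_k]`
is invariant under any permutation `σ` of the group labels applied coordinatewise to
`q`: the conditioning events have equal (positive) probability and the corresponding
set integrals of `g(X^{(1,…,k)})` coincide. -/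
theorem stmt11 {Ω 𝒳 : Type*} [MeasurableSpace Ω] [MeasurableSpace 𝒳]
    (μ : Measure Ω) [IsProbabilityMeasure μ]
    (Q k : ℕ) (hQ : 0 < Q) (hk : 1 ≤ k)
    (Z : Fin k → Ω → Fin Q) (hZmeas : ∀ i, Measurable (Z i))
    (U : {p : Fin k × Fin k // p.1 < p.2} → Ω → ℝ) (hUmeas : ∀ p, Measurable (U p))
    (F : Bool → ℝ → 𝒳) (hF : Measurable fun x : Bool × ℝ => F x.1 x.2)
    (hindep : iIndepFun (m := fun _ : Fin k ⊕ {p : Fin k × Fin k // p.1 < p.2} => inferInstance)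
      (fun i => Sum.elim (fun j ω => (Z j ω, (0 : ℝ)))
        (fun p ω => ((⟨0, hQ⟩ : Fin Q), U p ω)) i) μ)
    (hZlaw : ∀ i q, μ {ω | Z i ω = q} = (Q : ENNReal)⁻¹)
    (hUlaw : ∀ p, μ.map (U p) = volume.restrict (Set.Icc (0:ℝ) 1))
    (X : {p : Fin k × Fin k // p.1 < p.2} → Ω → 𝒳)
    (hX : ∀ p ω, X p ω = F (decide (Z p.1.1 ω = Z p.1.2 ω)) (U p ω))
    (g : ({p : Fin k × Fin k // p.1 < p.2} → 𝒳) → ℝ)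
    (hgmeas : Measurable g) (hgbdd : ∃ C, ∀ v, |g v| ≤ C)
    (q : Fin k → Fin Q) (σ : Equiv.Perm (Fin Q)) :
    μ {ω | ∀ l, Z l ω = σ (q l)} = μ {ω | ∀ l, Z l ω = q l} ∧
    ∫ ω in {ω | ∀ l, Z l ω = σ (q l)}, g (fun p => X p ω) ∂μ
      = ∫ ω in {ω | ∀ l, Z l ω = q l}, g (fun p => X p ω) ∂μ :=
  stmt11_general μ Q k hQ Z hZmeas U hUmeas F hF hindep hZlaw X hX g hgmeas q σ
end

section
/- Let δ ∈ (0,1/2) and for parameters η = (π, α, β) with all π_q ≥ δ and α, β ∈ [δ, 1-δ], define ℓ_n(η) = (1/(n(n-1)(n-2))) Σ over injective triples (i,j,k) of log P_η(X_{ij},X_{ik},X_{jk}), where P_η is the binary affiliation triplet mixture likelihood. Then the family {ℓ_n : n ≥ 1} is uniformly equicontinuous: for all η, η' in the constrained parameter set with ‖η - η'‖_∞ ≤ ν, |ℓ_n(η) - ℓ_n(η')| ≤ 6ν/δ for every n and every realization of the data. -/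
/-- Uniform equicontinuity of the normalized triplet composite log-likelihood of the
binary affiliation model on the `δ`-constrained parameter set: if the parameters
`η = (π,α,β)` and `η' = (π',α',β')` are `ν`-close in sup norm, then for every `n` and
every realization of the data, `|ℓ_n(η) - ℓ_n(η')| ≤ 6ν/δ`. -/
theorem stmt16 (Q : ℕ) (δ : ℝ) (hδ : δ ∈ Set.Ioo (0:ℝ) (1/2))
    (b : Bool → ℝ → ℝ) (hb : ∀ x p, b x p = if x then p else 1 - p)
    (P : (Fin Q → ℝ) → ℝ → ℝ → Bool → Bool → Bool → ℝ)
    (hP : ∀ π α β x y z, P π α β x y z =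
      ∑ q, ∑ ℓ, ∑ m, π q * π ℓ * π m
        * b x (if q = ℓ then α else β) * b y (if q = m then α else β)
        * b z (if ℓ = m then α else β))
    (π π' : Fin Q → ℝ) (α β α' β' : ℝ)
    (hπ : ∀ q, δ ≤ π q) (hsum : ∑ q, π q = 1)
    (hπ' : ∀ q, δ ≤ π' q) (hsum' : ∑ q, π' q = 1)
    (hα : α ∈ Set.Icc δ (1 - δ)) (hβ : β ∈ Set.Icc δ (1 - δ))
    (hα' : α' ∈ Set.Icc δ (1 - δ)) (hβ' : β' ∈ Set.Icc δ (1 - δ))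
    (ν : ℝ)
    (hclose : (∀ q, |π q - π' q| ≤ ν) ∧ |α - α'| ≤ ν ∧ |β - β'| ≤ ν) :
    ∀ (n : ℕ) (X : ℕ → ℕ → Bool),
      |(1 / ((n : ℝ) * ((n : ℝ) - 1) * ((n : ℝ) - 2))) *
          (∑ i : Fin n, ∑ j : Fin n, ∑ k : Fin n,
            if i ≠ j ∧ i ≠ k ∧ j ≠ k then
              Real.log (P π α β (X i j) (X i k) (X j k)) else 0)
        - (1 / ((n : ℝ) * ((n : ℝ) - 1) * ((n : ℝ) - 2))) *
          (∑ i : Fin n, ∑ j : Fin n, ∑ k : Fin n,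
            if i ≠ j ∧ i ≠ k ∧ j ≠ k then
              Real.log (P π' α' β' (X i j) (X i k) (X j k)) else 0)|
        ≤ 6 * ν / δ := by
  obtain ⟨hν1, hν2, hν3⟩ := hclose
  have hδ0 : 0 < δ := hδ.1
  have hν0 : 0 ≤ ν := le_trans (abs_nonneg _) hν2
  have hC0 : 0 ≤ 6 * ν / δ := by positivity
  -- Q ≠ 0
  have hQ : 0 < Q := by
    by_contra h
    push_neg at h
    interval_cases Q
    simp at hsum
  -- scalar comparison lemma
  have mono : ∀ a a' : ℝ, δ ≤ a → δ ≤ a' → |a - a'| ≤ ν →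
      a ≤ Real.exp (ν / δ) * a' := by
    intro a a' ha ha' h
    have h1 : a ≤ a' + ν := by
      have := (abs_le.mp h).2; linarith
    have h2 : ν ≤ a' * (ν / δ) := by
      have h' : δ * (ν / δ) ≤ a' * (ν / δ) :=
        mul_le_mul_of_nonneg_right ha' (by positivity)
      have : δ * (ν / δ) = ν := by field_simp
      linarith
    have h3 : (1 : ℝ) + ν / δ ≤ Real.exp (ν / δ) := by
      have := Real.add_one_le_exp (ν / δ); linarith
    have ha'0 : 0 ≤ a' := le_trans hδ0.le ha'
    have h4 : a' * (1 + ν / δ) ≤ a' * Real.exp (ν / δ) :=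
      mul_le_mul_of_nonneg_left h3 ha'0
    nlinarith
  -- bounds on b
  have hbδ : ∀ (x : Bool) (p : ℝ), p ∈ Set.Icc δ (1 - δ) → δ ≤ b x p := by
    intro x p hp
    rw [hb]
    cases x
    · simpa using by linarith [hp.2]
    · simpa using hp.1
  have hbdiff : ∀ (x : Bool) (p p' : ℝ), |b x p - b x p'| = |p - p'| := by
    intro x p p'
    rw [hb, hb]
    cases x
    · simp only [Bool.false_eq_true, if_false]
      rw [show (1 - p) - (1 - p') = -(p - p') by ring, abs_neg]
    · simp
  have hbcomp : ∀ (w : Bool) (c1 c2 : ℝ), c1 ∈ Set.Icc δ (1-δ) → c2 ∈ Set.Icc δ (1-δ) →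
      |c1 - c2| ≤ ν → b w c1 ≤ Real.exp (ν / δ) * b w c2 := by
    intro w c1 c2 hc1 hc2 hcd
    exact mono _ _ (hbδ w c1 hc1) (hbδ w c2 hc2) (by rw [hbdiff]; exact hcd)
  -- comparison of P values
  have Pcomp : ∀ (π1 π2 : Fin Q → ℝ) (α1 β1 α2 β2 : ℝ),
      (∀ q, δ ≤ π1 q) → (∀ q, δ ≤ π2 q) → (∀ q, |π1 q - π2 q| ≤ ν) →
      α1 ∈ Set.Icc δ (1-δ) → α2 ∈ Set.Icc δ (1-δ) →
      β1 ∈ Set.Icc δ (1-δ) → β2 ∈ Set.Icc δ (1-δ) →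
      |α1 - α2| ≤ ν → |β1 - β2| ≤ ν →
      ∀ x y z : Bool, P π1 α1 β1 x y z ≤ Real.exp (6 * ν / δ) * P π2 α2 β2 x y z := by
    intro π1 π2 α1 β1 α2 β2 h1 h2 h12 hα1 hα2 hβ1 hβ2 hαd hβd x y z
    rw [hP, hP, Finset.mul_sum]
    apply Finset.sum_le_sum
    intro q _
    rw [Finset.mul_sum]
    apply Finset.sum_le_sum
    intro ℓ _
    rw [Finset.mul_sum]
    apply Finset.sum_le_sum
    intro m _
    have hEeq : Real.exp (6 * ν / δ) = Real.exp (ν / δ) ^ 6 := by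
      rw [← Real.exp_nat_mul]
      norm_num
      ring_nf
    set E := Real.exp (ν / δ) with hE
    have hE0 : 0 ≤ E := Real.exp_nonneg _
    have hmem : ∀ (u v : Fin Q), (if u = v then α1 else β1) ∈ Set.Icc δ (1-δ) ∧
        (if u = v then α2 else β2) ∈ Set.Icc δ (1-δ) ∧
        |(if u = v then α1 else β1) - (if u = v then α2 else β2)| ≤ ν := by
      intro u v
      split_ifs
      · exact ⟨hα1, hα2, hαd⟩
      · exact ⟨hβ1, hβ2, hβd⟩
    obtain ⟨m1, m2, m3⟩ := hmem q ℓ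
    obtain ⟨n1, n2, n3⟩ := hmem q m
    obtain ⟨o1, o2, o3⟩ := hmem ℓ m
    have e1 : π1 q ≤ E * π2 q := mono _ _ (h1 q) (h2 q) (h12 q)
    have e2 : π1 ℓ ≤ E * π2 ℓ := mono _ _ (h1 ℓ) (h2 ℓ) (h12 ℓ)
    have e3 : π1 m ≤ E * π2 m := mono _ _ (h1 m) (h2 m) (h12 m)
    have e4 := hbcomp x _ _ m1 m2 m3
    have e5 := hbcomp y _ _ n1 n2 n3
    have e6 := hbcomp z _ _ o1 o2 o3
    have n1' : (0:ℝ) ≤ π1 q := le_trans hδ0.le (h1 q)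
    have n2' : (0:ℝ) ≤ π1 ℓ := le_trans hδ0.le (h1 ℓ)
    have n3' : (0:ℝ) ≤ π1 m := le_trans hδ0.le (h1 m)
    have n4' : (0:ℝ) ≤ b x (if q = ℓ then α1 else β1) := le_trans hδ0.le (hbδ _ _ m1)
    have n5' : (0:ℝ) ≤ b y (if q = m then α1 else β1) := le_trans hδ0.le (hbδ _ _ n1)
    have n6' : (0:ℝ) ≤ b z (if ℓ = m then α1 else β1) := le_trans hδ0.le (hbδ _ _ o1)
    have q1' : (0:ℝ) ≤ π2 q := le_trans hδ0.le (h2 q)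
    have q2' : (0:ℝ) ≤ π2 ℓ := le_trans hδ0.le (h2 ℓ)
    have q3' : (0:ℝ) ≤ π2 m := le_trans hδ0.le (h2 m)
    have q4' : (0:ℝ) ≤ b x (if q = ℓ then α2 else β2) := le_trans hδ0.le (hbδ _ _ m2)
    have q5' : (0:ℝ) ≤ b y (if q = m then α2 else β2) := le_trans hδ0.le (hbδ _ _ n2)
    have q6' : (0:ℝ) ≤ b z (if ℓ = m then α2 else β2) := le_trans hδ0.le (hbδ _ _ o2)
    calc π1 q * π1 ℓ * π1 m * b x (if q = ℓ then α1 else β1)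
          * b y (if q = m then α1 else β1) * b z (if ℓ = m then α1 else β1)
        ≤ (E * π2 q) * (E * π2 ℓ) * (E * π2 m) * (E * b x (if q = ℓ then α2 else β2))
          * (E * b y (if q = m then α2 else β2)) * (E * b z (if ℓ = m then α2 else β2)) := by
          gcongr <;> first
            | assumption
            | (repeat first | apply mul_nonneg | assumption)
      _ = E ^ 6 * (π2 q * π2 ℓ * π2 m * b x (if q = ℓ then α2 else β2)
          * b y (if q = m then α2 else β2) * b z (if ℓ = m then α2 else β2)) := by ring
      _ = Real.exp (6 * ν / δ) * _ := by rw [hEeq]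
  -- positivity of P
  have Ppos : ∀ (π1 : Fin Q → ℝ) (α1 β1 : ℝ), (∀ q, δ ≤ π1 q) →
      α1 ∈ Set.Icc δ (1-δ) → β1 ∈ Set.Icc δ (1-δ) →
      ∀ x y z : Bool, 0 < P π1 α1 β1 x y z := by
    intro π1 α1 β1 h1 hα1 hβ1 x y z
    rw [hP]
    have hne : (Finset.univ : Finset (Fin Q)).Nonempty := ⟨⟨0, hQ⟩, Finset.mem_univ _⟩
    refine Finset.sum_pos (fun q _ => Finset.sum_pos (fun ℓ _ => Finset.sum_pos (fun m _ => ?_) hne) hne) hne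
    have hmem : ∀ (u v : Fin Q), (if u = v then α1 else β1) ∈ Set.Icc δ (1-δ) := by
      intro u v; split_ifs <;> assumption
    have b1 := lt_of_lt_of_le hδ0 (hbδ x _ (hmem q ℓ))
    have b2 := lt_of_lt_of_le hδ0 (hbδ y _ (hmem q m))
    have b3 := lt_of_lt_of_le hδ0 (hbδ z _ (hmem ℓ m))
    have p1 := lt_of_lt_of_le hδ0 (h1 q)
    have p2 := lt_of_lt_of_le hδ0 (h1 ℓ)
    have p3 := lt_of_lt_of_le hδ0 (h1 m)
    positivity
  -- pointwise log bound
  have key : ∀ x y z : Bool,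
      |Real.log (P π α β x y z) - Real.log (P π' α' β' x y z)| ≤ 6 * ν / δ := by
    intro x y z
    have hp1 := Ppos π α β hπ hα hβ x y z
    have hp2 := Ppos π' α' β' hπ' hα' hβ' x y z
    have hle1 := Pcomp π π' α β α' β' hπ hπ' hν1 hα hα' hβ hβ' hν2 hν3 x y z
    have hle2 := Pcomp π' π α' β' α β hπ' hπ (fun q => by rw [abs_sub_comm]; exact hν1 q)
      hα' hα hβ' hβ (by rw [abs_sub_comm]; exact hν2) (by rw [abs_sub_comm]; exact hν3) x y z
    have hL1 : Real.log (P π α β x y z) ≤ 6*ν/δ + Real.log (P π' α' β' x y z) := by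
      have := Real.log_le_log hp1 hle1
      rwa [Real.log_mul (Real.exp_ne_zero _) (ne_of_gt hp2), Real.log_exp] at this
    have hL2 : Real.log (P π' α' β' x y z) ≤ 6*ν/δ + Real.log (P π α β x y z) := by
      have := Real.log_le_log hp2 hle2
      rwa [Real.log_mul (Real.exp_ne_zero _) (ne_of_gt hp1), Real.log_exp] at this
    rw [abs_sub_le_iff]
    constructor <;> linarith
  intro n X
  rcases lt_or_ge n 3 with hn | hn
  · have hfalse : ∀ i j k : Fin n, ¬(i ≠ j ∧ i ≠ k ∧ j ≠ k) := by
      rintro i j k ⟨h1, h2, h3⟩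
      have hi := i.isLt; have hj := j.isLt; have hk := k.isLt
      simp only [Ne, Fin.ext_iff] at h1 h2 h3
      omega
    simp only [hfalse, if_false, Finset.sum_const_zero, mul_zero, sub_zero, abs_zero]
    exact hC0
  · set N : ℝ := (n : ℝ) * ((n : ℝ) - 1) * ((n : ℝ) - 2) with hNdef
    have hn3 : (3:ℝ) ≤ (n:ℝ) := by exact_mod_cast hn
    have hN : 0 < N := by
      apply mul_pos (mul_pos (by linarith) (by linarith))
      linarith
    rw [← mul_sub, abs_mul, abs_of_pos (by positivity : (0:ℝ) < 1/N)]
    rw [← Finset.sum_sub_distrib]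
    simp only [← Finset.sum_sub_distrib]
    have hcount : (∑ i : Fin n, ∑ j : Fin n, ∑ k : Fin n,
        (if i ≠ j ∧ i ≠ k ∧ j ≠ k then (6*ν/δ) else 0)) = N * (6*ν/δ) := by
      have inner : ∀ i j : Fin n, (∑ k : Fin n,
          (if i ≠ j ∧ i ≠ k ∧ j ≠ k then (6*ν/δ) else 0))
          = if i ≠ j then ((n:ℝ) - 2) * (6*ν/δ) else 0 := by
        intro i j
        split_ifs with hij
        · have hcongr : ∀ k : Fin n, (if i ≠ j ∧ i ≠ k ∧ j ≠ k then (6*ν/δ) else 0)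
              = if k ≠ i ∧ k ≠ j then (6*ν/δ) else 0 := by
            intro k
            congr 1
            simp only [eq_iff_iff]
            constructor
            · rintro ⟨_, h2, h3⟩; exact ⟨Ne.symm h2, Ne.symm h3⟩
            · rintro ⟨h2, h3⟩; exact ⟨hij, Ne.symm h2, Ne.symm h3⟩
          rw [Finset.sum_congr rfl (fun k _ => hcongr k)]
          rw [Finset.sum_ite, Finset.sum_const, Finset.sum_const_zero, add_zero,
            nsmul_eq_mul]
          have hfil : Finset.univ.filter (fun k : Fin n => k ≠ i ∧ k ≠ j)
              = ({i, j} : Finset (Fin n))ᶜ := by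
            ext k; simp [not_or]
          rw [hfil, Finset.card_compl, Finset.card_pair hij, Fintype.card_fin]
          have h2n : 2 ≤ n := by omega
          rw [Nat.cast_sub h2n]
          norm_num
        · push_neg at hij
          simp [hij]
      rw [Finset.sum_congr rfl (fun i _ => Finset.sum_congr rfl (fun j _ => inner i j))]
      have inner2 : ∀ i : Fin n, (∑ j : Fin n,
          (if i ≠ j then ((n:ℝ) - 2) * (6*ν/δ) else 0))
          = ((n:ℝ)-1) * (((n:ℝ) - 2) * (6*ν/δ)) := by
        intro i
        rw [Finset.sum_ite, Finset.sum_const, Finset.sum_const_zero, add_zero,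
          nsmul_eq_mul]
        have hfil : Finset.univ.filter (fun j : Fin n => i ≠ j)
            = ({i} : Finset (Fin n))ᶜ := by
          ext j; simp [ne_comm]
        rw [hfil, Finset.card_compl, Finset.card_singleton, Fintype.card_fin]
        have h1n : 1 ≤ n := by omega
        rw [Nat.cast_sub h1n]
        norm_num
      rw [Finset.sum_congr rfl (fun i _ => inner2 i)]
      rw [Finset.sum_const, Finset.card_univ, Fintype.card_fin, nsmul_eq_mul, hNdef]
      ring
    calc (1/N) * |∑ i : Fin n, ∑ j : Fin n, ∑ k : Fin n,
          ((if i ≠ j ∧ i ≠ k ∧ j ≠ k then Real.log (P π α β (X i j) (X i k) (X j k)) else 0)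
          - (if i ≠ j ∧ i ≠ k ∧ j ≠ k then Real.log (P π' α' β' (X i j) (X i k) (X j k)) else 0))|
        ≤ (1/N) * (∑ i : Fin n, ∑ j : Fin n, ∑ k : Fin n,
          (if i ≠ j ∧ i ≠ k ∧ j ≠ k then (6*ν/δ) else 0)) := by
          apply mul_le_mul_of_nonneg_left _ (by positivity)
          refine le_trans (Finset.abs_sum_le_sum_abs _ _) (Finset.sum_le_sum fun i _ => ?_)
          refine le_trans (Finset.abs_sum_le_sum_abs _ _) (Finset.sum_le_sum fun j _ => ?_)
          refine le_trans (Finset.abs_sum_le_sum_abs _ _) (Finset.sum_le_sum fun k _ => ?_)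
          split_ifs with h
          · exact key _ _ _
          · simp
      _ = (1/N) * (N * (6*ν/δ)) := by rw [hcount]
      _ = 6*ν/δ := by field_simp
end
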